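/- With 𝒫 : S² × S² → G_{2,4} as defined via the block formula 𝒫(x,y) = (1/2)[[1 + xᵀy, −(x×y)ᵀ],[−(x×y), xyᵀ + yxᵀ + (1−xᵀy)I₃]], for all x, y, u, v ∈ S² the Frobenius inner product satisfies ⟨𝒫(x,y), 𝒫(u,v)⟩_F = 1 + ⟨x,u⟩·⟨y,v⟩. -/

import Mathlib

open Matrix

/-- The parametrization `𝒫 : S² × S² → ℝ^{4×4}` given in block form by
`𝒫(x,y) = (1/2)[[1 + xᵀy, -(x×y)ᵀ],[-(x×y), xyᵀ + yxᵀ + (1-xᵀy)I₃]]`. -/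
noncomputable def Pmat (x y : Fin 3 → ℝ) : Matrix (Fin 4) (Fin 4) ℝ :=
  let d : ℝ := x 0 * y 0 + x 1 * y 1 + x 2 * y 2
  let c : Fin 3 → ℝ :=
    ![x 1 * y 2 - x 2 * y 1, x 2 * y 0 - x 0 * y 2, x 0 * y 1 - x 1 * y 0]
  (1 / 2 : ℝ) •
    !![1 + d, -c 0, -c 1, -c 2;
       -c 0, x 0 * y 0 + y 0 * x 0 + (1 - d), x 0 * y 1 + y 0 * x 1, x 0 * y 2 + y 0 * x 2;
       -c 1, x 1 * y 0 + y 1 * x 0, x 1 * y 1 + y 1 * x 1 + (1 - d), x 1 * y 2 + y 1 * x 2;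
       -c 2, x 2 * y 0 + y 2 * x 0, x 2 * y 1 + y 2 * x 1, x 2 * y 2 + y 2 * x 2 + (1 - d)]

theorem Pmat_frobenius_inner_general (x y u v : Fin 3 → ℝ) :
    Matrix.trace ((Pmat x y)ᵀ * Pmat u v) =
      1 + (x 0 * u 0 + x 1 * u 1 + x 2 * u 2) * (y 0 * v 0 + y 1 * v 1 + y 2 * v 2) := by
  simp only [trace, diag_apply, mul_apply, transpose_apply, Fin.sum_univ_four, Pmat, smul_of,
    smul_cons, smul_empty, smul_eq_mul, of_apply, cons_val', cons_val_zero, cons_val_one, cons_val,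
    cons_val_fin_one]
  ring

/-- Frobenius inner product formula: `⟨𝒫(x,y), 𝒫(u,v)⟩_F = 1 + ⟨x,u⟩·⟨y,v⟩` for unit
vectors `x, y, u, v ∈ S²`. -/
theorem Pmat_frobenius_inner (x y u v : Fin 3 → ℝ)
    (hx : x 0 ^ 2 + x 1 ^ 2 + x 2 ^ 2 = 1) (hy : y 0 ^ 2 + y 1 ^ 2 + y 2 ^ 2 = 1)
    (hu : u 0 ^ 2 + u 1 ^ 2 + u 2 ^ 2 = 1) (hv : v 0 ^ 2 + v 1 ^ 2 + v 2 ^ 2 = 1) :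
    Matrix.trace ((Pmat x y)ᵀ * Pmat u v) =
      1 + (x 0 * u 0 + x 1 * u 1 + x 2 * u 2) * (y 0 * v 0 + y 1 * v 1 + y 2 * v 2) :=
  Pmat_frobenius_inner_general x y u v
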